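/- arXiv:1005.4357 — 6 statements merged into one kernel-verified Lean document; each statement's English description precedes it below -/
import Mathlib

section
/- Let g : ℝ → ℝ be continuous, and let t > 0. If the one-sided derivatives D⁺g(t) and D⁻g(t) both exist and are finite, then the generalized derivative 𝒟g(t) exists and 𝒟g(t) = (1/2)·(D⁺g(t) + D⁻g(t)); that is, lim_{h→0⁺} (3/(2h³)) ∫₀ʰ r·(g(t+r) − g(t−r)) dr = (1/2)·(D⁺g(t) + D⁻g(t)). -/
open Filter MeasureTheory Set

/-- The generalized derivative of `g : ℝ → ℝ` at `t` is `L` if the averaged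
difference quotient from the paper converges to `L` as `h → 0⁺`.
For `t > 0` it uses `(3/(2h³)) ∫₀ʰ r (g(t+r) - g(t-r)) dr`; at `t = 0` it uses
`(3/h³) ∫₀ʰ r (g(r) - g(0)) dr`. -/
def HasGenDerivAt (g : ℝ → ℝ) (t L : ℝ) : Prop :=
  if t = 0 then
    Tendsto (fun h : ℝ => (3 / h ^ 3) * ∫ r in (0:ℝ)..h, r * (g r - g 0))
      (nhdsWithin 0 (Ioi 0)) (nhds L)
  else
    Tendsto (fun h : ℝ => (3 / (2 * h ^ 3)) * ∫ r in (0:ℝ)..h, r * (g (t + r) - g (t - r)))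
      (nhdsWithin 0 (Ioi 0)) (nhds L)

/-- `g` has right derivative `D` at `t`. -/
def HasRightDerivAt' (g : ℝ → ℝ) (t D : ℝ) : Prop :=
  Tendsto (fun ε : ℝ => (g (t + ε) - g t) / ε) (nhdsWithin 0 (Ioi 0)) (nhds D)

/-- `g` has left derivative `D` at `t`. -/
def HasLeftDerivAt' (g : ℝ → ℝ) (t D : ℝ) : Prop :=
  Tendsto (fun ε : ℝ => (g (t + ε) - g t) / ε) (nhdsWithin 0 (Iio 0)) (nhds D)

/-!
Since `(g (t + r) - g (t - r)) / r` is the sum of the right difference quotient at `r` and the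
left one at `-r`, it tends to `D⁺g(t) + D⁻g(t)`. The generalized derivative is a weighted mean
of this quotient against the weight `r²`, so by L'Hôpital's rule (after the fundamental theorem
of calculus) it has the same limit, halved.
-/

open Topology

theorem tendsto_symmetric_difference_quotient {g : ℝ → ℝ} {t Dp Dm : ℝ}
    (hDp : HasRightDerivAt' g t Dp) (hDm : HasLeftDerivAt' g t Dm) :
    Tendsto (fun r => (g (t + r) - g (t - r)) / r) (𝓝[>] 0) (𝓝 (Dp + Dm)) := by
  have hneg : Tendsto Neg.neg (𝓝[>] (0 : ℝ)) (𝓝[<] 0) := by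
    simpa using tendsto_neg_nhdsGT_neg (a := (0 : ℝ))
  refine (hDp.add (hDm.comp hneg)).congr fun r => ?_
  simp only [Function.comp, ← sub_eq_add_neg]
  rw [div_neg, ← sub_eq_add_neg, ← sub_div]
  ring_nf

theorem tendsto_mul_integral_of_tendsto_div_pow {φ : ℝ → ℝ} (hφ : Continuous φ) (n : ℕ) {L : ℝ}
    (hL : Tendsto (fun r => φ r / r ^ n) (𝓝[>] 0) (𝓝 L)) :
    Tendsto (fun h => (n + 1) / h ^ (n + 1) * ∫ r in (0:ℝ)..h, φ r) (𝓝[>] 0) (𝓝 L) := by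
  have hF : ∀ h, HasDerivAt (fun h => ∫ r in (0:ℝ)..h, φ r) (φ h) h := fun h =>
    intervalIntegral.integral_hasDerivAt_right (hφ.intervalIntegrable _ _)
      hφ.aestronglyMeasurable.stronglyMeasurableAtFilter hφ.continuousAt
  have hG : ∀ h : ℝ, HasDerivAt (fun h : ℝ => h ^ (n + 1) / (n + 1)) (h ^ n) h := fun h =>
    ((hasDerivAt_pow (n + 1) h).div_const _).congr_deriv <| by
      rw [Nat.add_sub_cancel]; push_cast; field_simp
  have hlim := HasDerivAt.lhopital_zero_nhdsGT (Eventually.of_forall hF) (Eventually.of_forall hG)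
    (eventually_mem_nhdsWithin.mono fun r (hr : 0 < r) => (pow_pos hr n).ne')
    ?_ ?_ hL
  · refine hlim.congr fun h => ?_
    rw [div_div_eq_mul_div]
    ring
  · simpa using (hF 0).continuousAt.tendsto.mono_left nhdsWithin_le_nhds
  · simpa using (hG 0).continuousAt.tendsto.mono_left nhdsWithin_le_nhds

theorem generalized_deriv_eq_avg_of_one_sided_derivs
    (g : ℝ → ℝ) (hg : Continuous g) (t : ℝ) (ht : 0 < t) (Dp Dm : ℝ)
    (hDp : HasRightDerivAt' g t Dp) (hDm : HasLeftDerivAt' g t Dm) :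
    HasGenDerivAt g t ((1 / 2) * (Dp + Dm)) := by
  rw [HasGenDerivAt, if_neg ht.ne']
  have hφ : Continuous fun r => r * (g (t + r) - g (t - r)) := by fun_prop
  have hquot : Tendsto (fun r => r * (g (t + r) - g (t - r)) / r ^ 2) (𝓝[>] 0)
      (𝓝 (Dp + Dm)) :=
    (tendsto_symmetric_difference_quotient hDp hDm).congr' <|
      eventually_mem_nhdsWithin.mono fun r (hr : 0 < r) => by field_simp
  refine ((tendsto_mul_integral_of_tendsto_div_pow hφ 2 hquot).const_mul (1 / 2)).congr
    fun h => ?_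
  push_cast
  ring
end

section
/- Let g : ℝ → ℝ be continuous. If the right derivative D⁺g(0) exists and is finite, then 𝒟g(0) exists and 𝒟g(0) = D⁺g(0); that is, lim_{h→0⁺} (3/h³) ∫₀ʰ r·(g(r) − g(0)) dr = D⁺g(0). -/
open Filter MeasureTheory Set

/-! Writing `r (g r - g 0) = r² q r` with `q r = (g r - g 0) / r` the difference quotient, the
quantity `(3 / h³) ∫₀ʰ r (g r - g 0) dr` is the mean of `q` over `[0, h]` against the probability
density `3 r² / h³`, so it tends to `lim_{r → 0⁺} q r = D⁺g(0)`. -/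

open Topology

noncomputable def powWeightedAverage (n : ℕ) (q : ℝ → ℝ) (h : ℝ) : ℝ :=
  (n + 1) / h ^ (n + 1) * ∫ r in (0:ℝ)..h, r ^ n * q r

section PowWeightedAverage

variable {q : ℝ → ℝ} {D ε h : ℝ} (n : ℕ)

lemma powWeightedAverage_sub (hh : h ≠ 0)
    (hq : IntervalIntegrable (fun r => r ^ n * q r) volume 0 h) :
    powWeightedAverage n q h - D = powWeightedAverage n (fun r => q r - D) h := by
  have hpow : IntervalIntegrable (fun r : ℝ => r ^ n * D) volume 0 h :=
    (continuous_pow n |>.mul continuous_const).intervalIntegrable 0 h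
  simp only [powWeightedAverage, mul_sub]
  rw [intervalIntegral.integral_sub hq hpow, intervalIntegral.integral_mul_const, integral_pow]
  field_simp
  ring

lemma abs_powWeightedAverage_sub_le (hh : 0 < h)
    (hq : IntervalIntegrable (fun r => r ^ n * q r) volume 0 h)
    (hbound : ∀ r ∈ Ioc 0 h, |q r - D| ≤ ε) :
    |powWeightedAverage n q h - D| ≤ ε := by
  have hint : |∫ r in (0:ℝ)..h, r ^ n * (q r - D)| ≤ ∫ r in (0:ℝ)..h, r ^ n * ε := by
    rw [← Real.norm_eq_abs]
    refine intervalIntegral.norm_integral_le_of_norm_le hh.le (ae_of_all _ fun r hr => ?_)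
      ((continuous_pow n |>.mul continuous_const).intervalIntegrable 0 h)
    rw [Real.norm_eq_abs, abs_mul, abs_of_nonneg (pow_nonneg hr.1.le n)]
    exact mul_le_mul_of_nonneg_left (hbound r hr) (pow_nonneg hr.1.le n)
  rw [intervalIntegral.integral_mul_const, integral_pow] at hint
  rw [powWeightedAverage_sub n hh.ne' hq, powWeightedAverage, abs_mul, abs_of_pos (by positivity)]
  calc (n + 1) / h ^ (n + 1) * |∫ r in (0:ℝ)..h, r ^ n * (q r - D)|
      ≤ (n + 1) / h ^ (n + 1) * ((h ^ (n + 1) - 0 ^ (n + 1)) / (n + 1) * ε) := by gcongr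
    _ = ε := by field_simp; simp

lemma tendsto_powWeightedAverage (hq : Tendsto q (𝓝[>] 0) (𝓝 D))
    (hint : ∀ h > 0, IntervalIntegrable (fun r => r ^ n * q r) volume 0 h) :
    Tendsto (powWeightedAverage n q) (𝓝[>] 0) (𝓝 D) := by
  rw [Metric.tendsto_nhdsWithin_nhds] at hq ⊢
  intro ε hε
  obtain ⟨δ, hδ, hqδ⟩ := hq (ε / 2) (half_pos hε)
  refine ⟨δ, hδ, fun h (hh : 0 < h) hhδ => ?_⟩
  rw [Real.dist_eq, sub_zero, abs_of_pos hh] at hhδ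
  rw [Real.dist_eq]
  refine (abs_powWeightedAverage_sub_le n hh (hint h hh) fun r hr => ?_).trans_lt (half_lt_self hε)
  refine (hqδ hr.1 ?_).le
  rw [Real.dist_eq, sub_zero, abs_of_pos hr.1]
  exact hr.2.trans_lt hhδ

end PowWeightedAverage

theorem generalized_deriv_at_zero_eq_right_deriv
    (g : ℝ → ℝ) (hg : Continuous g) (D : ℝ) (hD : HasRightDerivAt' g 0 D) :
    HasGenDerivAt g 0 D := by
  simp only [HasRightDerivAt', zero_add] at hD
  have hsq : (fun r => r * (g r - g 0)) = fun r => r ^ 2 * ((g r - g 0) / r) := by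
    ext r
    rcases eq_or_ne r 0 with rfl | hr
    · simp
    · field_simp
  have hcont : Continuous fun r => r ^ 2 * ((g r - g 0) / r) := hsq ▸ by fun_prop
  rw [HasGenDerivAt, if_pos rfl, hsq]
  convert tendsto_powWeightedAverage 2 hD fun h _ => hcont.intervalIntegrable 0 h using 2
  norm_num [powWeightedAverage]
end

section
/- Let g : ℝ → ℝ be convex. Then for every t > 0 the generalized derivative 𝒟g(t) exists and equals (1/2)·(g′₊(t) + g′₋(t)), where g′₊(t) and g′₋(t) are the (finite) right and left derivatives of the convex function g at t. In particular, 𝒟g(t) exists at every t > 0. -/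
open Filter MeasureTheory Set

/-! The one-sided derivatives of a convex function exist, so the symmetric quotient
`(g (t + r) - g (t - r)) / r` tends to `g'₊(t) + g'₋(t)` as `r → 0⁺`. The integrand
`r (g (t + r) - g (t - r))` is `r²` times this quotient, and `3 r² / h³ dr` is a probability
density on `[0, h]` concentrating at `0`, so the averages converge to the same limit. -/

open Topology

theorem abs_pow_weighted_average_sub_le {φ : ℝ → ℝ} {a ε h : ℝ} (n : ℕ) (hh : 0 < h)
    (hint : IntervalIntegrable (fun r => r ^ n * φ r) volume 0 h)
    (hφ : ∀ r ∈ Ioc 0 h, |φ r - a| ≤ ε) :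
    |(n + 1) / h ^ (n + 1) * (∫ r in 0..h, r ^ n * φ r) - a| ≤ ε := by
  have hpow : ∫ r in 0..h, r ^ n = h ^ (n + 1) / (n + 1) := by simp
  have hint_pow (c : ℝ) : IntervalIntegrable (fun r => c * r ^ n) volume 0 h :=
    (by fun_prop : Continuous fun r : ℝ => c * r ^ n).intervalIntegrable 0 h
  have hsub : (n + 1) / h ^ (n + 1) * (∫ r in 0..h, r ^ n * φ r) - a
      = (n + 1) / h ^ (n + 1) * ∫ r in 0..h, r ^ n * (φ r - a) := by
    simp_rw [mul_sub, mul_comm _ a]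
    rw [intervalIntegral.integral_sub hint (hint_pow a), intervalIntegral.integral_const_mul,
      hpow]
    field_simp
  have hbound : |∫ r in 0..h, r ^ n * (φ r - a)| ≤ ε * (h ^ (n + 1) / (n + 1)) := by
    rw [← hpow, ← intervalIntegral.integral_const_mul, ← Real.norm_eq_abs]
    refine intervalIntegral.norm_integral_le_of_norm_le hh.le (ae_of_all _ fun r hr => ?_)
      (hint_pow ε)
    rw [Real.norm_eq_abs, abs_mul, abs_of_nonneg (pow_nonneg hr.1.le n), mul_comm ε]
    exact mul_le_mul_of_nonneg_left (hφ r hr) (pow_nonneg hr.1.le n)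
  rw [hsub, abs_mul, abs_of_pos (by positivity)]
  calc _ ≤ (n + 1) / h ^ (n + 1) * (ε * (h ^ (n + 1) / (n + 1))) := by gcongr
    _ = ε := by field_simp

theorem tendsto_pow_weighted_average {φ : ℝ → ℝ} {a : ℝ} (n : ℕ)
    (hφ : Tendsto φ (𝓝[>] 0) (𝓝 a))
    (hint : ∀ h, IntervalIntegrable (fun r => r ^ n * φ r) volume 0 h) :
    Tendsto (fun h => (n + 1) / h ^ (n + 1) * ∫ r in 0..h, r ^ n * φ r) (𝓝[>] 0) (𝓝 a) := by
  rw [Metric.tendsto_nhds]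
  intro ε hε
  obtain ⟨δ, hδ, hφδ⟩ := Metric.tendsto_nhdsWithin_nhds.1 hφ (ε / 2) (half_pos hε)
  filter_upwards [Ioo_mem_nhdsGT hδ] with h hh
  refine (abs_pow_weighted_average_sub_le n hh.1 (hint h) fun r hr => ?_).trans_lt
    (half_lt_self hε)
  refine (hφδ hr.1 ?_).le
  rw [Real.dist_eq, sub_zero, abs_of_pos hr.1]
  exact hr.2.trans_lt hh.2

theorem HasDerivWithinAt.hasRightDerivAt' {f : ℝ → ℝ} {x D : ℝ}
    (h : HasDerivWithinAt f D (Ioi x) x) : HasRightDerivAt' f x D := by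
  have hshift : Tendsto (x + ·) (𝓝[>] 0) (𝓝[>] x) := by
    rw [Tendsto, map_add_left_nhdsGT, add_zero]
  refine (((hasDerivWithinAt_iff_tendsto_slope' self_notMem_Ioi).1 h).comp hshift).congr
    fun ε => ?_
  simp [slope_def_field]

theorem HasDerivWithinAt.hasLeftDerivAt' {f : ℝ → ℝ} {x D : ℝ}
    (h : HasDerivWithinAt f D (Iio x) x) : HasLeftDerivAt' f x D := by
  have hshift : Tendsto (x + ·) (𝓝[<] 0) (𝓝[<] x) := by
    rw [Tendsto, map_add_left_nhdsLT, add_zero]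
  refine (((hasDerivWithinAt_iff_tendsto_slope' self_notMem_Iio).1 h).comp hshift).congr
    fun ε => ?_
  simp [slope_def_field]

theorem HasRightDerivAt'.tendsto_symmetric_quotient {g : ℝ → ℝ} {t Dp Dm : ℝ}
    (hp : HasRightDerivAt' g t Dp) (hm : HasLeftDerivAt' g t Dm) :
    Tendsto (fun r => (g (t + r) - g (t - r)) / r) (𝓝[>] 0) (𝓝 (Dp + Dm)) := by
  have hm' := hm.comp (by simpa using tendsto_neg_nhdsGT (a := (0 : ℝ)))
  refine (hp.add hm').congr fun r => ?_
  simp only [Function.comp_apply, div_neg, ← sub_eq_add_neg, ← sub_div]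
  ring_nf

theorem hasGenDerivAt_of_tendsto_symmetric_quotient {g : ℝ → ℝ} {t L : ℝ} (ht : t ≠ 0)
    (hg : Continuous g) (hL : Tendsto (fun r => (g (t + r) - g (t - r)) / r) (𝓝[>] 0) (𝓝 L)) :
    HasGenDerivAt g t (1 / 2 * L) := by
  have hweight : (fun r => r ^ 2 * ((g (t + r) - g (t - r)) / r))
      = fun r => r * (g (t + r) - g (t - r)) := by
    ext r
    rcases eq_or_ne r 0 with rfl | hr
    · simp
    · field_simp
  have hint (h : ℝ) :
      IntervalIntegrable (fun r => r ^ 2 * ((g (t + r) - g (t - r)) / r)) volume 0 h :=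
    hweight ▸ (by fun_prop : Continuous _).intervalIntegrable 0 h
  have havg := (tendsto_pow_weighted_average 2 hL hint).const_mul (1 / 2)
  rw [hweight] at havg
  rw [HasGenDerivAt, if_neg ht]
  refine havg.congr fun h => ?_
  push_cast
  ring

theorem generalized_deriv_of_convex
    (g : ℝ → ℝ) (hg : ConvexOn ℝ Set.univ g) (t : ℝ) (ht : 0 < t) :
    ∃ Dp Dm : ℝ, HasRightDerivAt' g t Dp ∧ HasLeftDerivAt' g t Dm ∧
      HasGenDerivAt g t ((1 / 2) * (Dp + Dm)) := by
  have ht_int : t ∈ interior univ := by simp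
  have hp := (hg.hasDerivWithinAt_rightDeriv_of_mem_interior ht_int).hasRightDerivAt'
  have hm := (hg.hasDerivWithinAt_leftDeriv_of_mem_interior ht_int).hasLeftDerivAt'
  have hcont : Continuous g := continuousOn_univ.1 (hg.continuousOn isOpen_univ)
  exact ⟨_, _, hp, hm,
    hasGenDerivAt_of_tendsto_symmetric_quotient ht.ne' hcont (hp.tendsto_symmetric_quotient hm)⟩
end

section
/- Let X : ℝ → ℝ be locally (Lebesgue) integrable and define g(t) = ∫₀ᵗ X(s) ds. If t > 0 is a Lebesgue point of X, i.e. (1/(2ε)) ∫_{t−ε}^{t+ε} |X(s) − X(t)| ds → 0 as ε → 0⁺, then the generalized derivative 𝒟g(t) exists and 𝒟g(t) = X(t). -/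
open Filter MeasureTheory Set

open Topology

/-! With `G u = ∫₀ᵘ X`, the increment `G(t + r) - G(t - r) = ∫_{t-r}^{t+r} X` is
`2 r X(t) + o(r)` at a Lebesgue point `t`. The generalized derivative averages the quotient
`(G(t + r) - G(t - r)) / (2r)` against the probability density `3 r² / h³` on `[0, h]`,
so it inherits the limit `X(t)`. -/

theorem abs_weighted_average_sub_le {φ : ℝ → ℝ} {L ε h : ℝ} (hh : 0 < h)
    (hφ : IntervalIntegrable φ volume 0 h) (hbound : ∀ r ∈ Ioc 0 h, |φ r / r - L| ≤ ε) :
    |3 / h ^ 3 * (∫ r in (0:ℝ)..h, r * φ r) - L| ≤ ε := by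
  have hh3 : h ^ 3 ≠ 0 := by positivity
  have hpow : IntervalIntegrable (fun r : ℝ => r ^ 2) volume 0 h :=
    (continuous_pow 2).intervalIntegrable _ _
  have hmoment : ∫ r in (0:ℝ)..h, r ^ 2 = h ^ 3 / 3 := by
    rw [integral_pow]; ring
  have hsplit : 3 / h ^ 3 * (∫ r in (0:ℝ)..h, r * φ r) - L
      = 3 / h ^ 3 * ∫ r in (0:ℝ)..h, (r * φ r - L * r ^ 2) := by
    rw [intervalIntegral.integral_sub (hφ.continuousOn_mul (g := fun r => r) continuousOn_id)
        (hpow.const_mul L),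
      intervalIntegral.integral_const_mul, hmoment]
    field_simp
  have hint : |∫ r in (0:ℝ)..h, (r * φ r - L * r ^ 2)| ≤ ε * (h ^ 3 / 3) := by
    rw [← hmoment, ← intervalIntegral.integral_const_mul, ← Real.norm_eq_abs]
    refine intervalIntegral.norm_integral_le_of_norm_le hh.le
      (Eventually.of_forall fun r hr => ?_) (hpow.const_mul ε)
    have hr0 : r ≠ 0 := hr.1.ne'
    calc ‖r * φ r - L * r ^ 2‖ = |r ^ 2 * (φ r / r - L)| := by
          rw [Real.norm_eq_abs]; congr 1; field_simp
      _ = r ^ 2 * |φ r / r - L| := by rw [abs_mul, abs_sq]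
      _ ≤ ε * r ^ 2 := by
          rw [mul_comm ε]; exact mul_le_mul_of_nonneg_left (hbound r hr) (sq_nonneg r)
  rw [hsplit, abs_mul, abs_of_pos (by positivity : (0:ℝ) < 3 / h ^ 3)]
  calc 3 / h ^ 3 * |∫ r in (0:ℝ)..h, (r * φ r - L * r ^ 2)|
      ≤ 3 / h ^ 3 * (ε * (h ^ 3 / 3)) := by gcongr
    _ = ε := by field_simp

theorem tendsto_weighted_average {φ : ℝ → ℝ} {L : ℝ}
    (hφ : ∀ h, IntervalIntegrable φ volume 0 h)
    (hlim : Tendsto (fun r => φ r / r) (𝓝[>] 0) (𝓝 L)) :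
    Tendsto (fun h => 3 / h ^ 3 * ∫ r in (0:ℝ)..h, r * φ r) (𝓝[>] 0) (𝓝 L) := by
  refine Metric.tendsto_nhds.2 fun ε hε => ?_
  obtain ⟨δ, hδ, hsub⟩ := mem_nhdsGT_iff_exists_Ioo_subset.1
    (hlim.eventually (Metric.closedBall_mem_nhds L (half_pos hε)))
  filter_upwards [Ioo_mem_nhdsGT hδ] with h hh
  refine (abs_weighted_average_sub_le hh.1 (hφ h) fun r hr => ?_).trans_lt (half_lt_self hε)
  exact hsub ⟨hr.1, hr.2.trans_lt hh.2⟩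

theorem tendsto_integral_symm_div_of_lebesgue_point {X : ℝ → ℝ} {t : ℝ}
    (hX : LocallyIntegrable X volume)
    (hleb : Tendsto (fun ε : ℝ => (1 / (2 * ε)) * ∫ s in (t - ε)..(t + ε), |X s - X t|)
      (𝓝[>] 0) (𝓝 0)) :
    Tendsto (fun r => (∫ s in (t - r)..(t + r), X s) / r) (𝓝[>] 0) (𝓝 (2 * X t)) := by
  rw [tendsto_iff_norm_sub_tendsto_zero]
  refine squeeze_zero' (Eventually.of_forall fun r => norm_nonneg _) ?_
    (by simpa only [mul_zero] using hleb.const_mul 2)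
  filter_upwards [self_mem_nhdsWithin] with r (hr : 0 < r)
  have hXi : IntervalIntegrable X volume (t - r) (t + r) :=
    (hX.integrableOn_isCompact isCompact_uIcc).intervalIntegrable
  have hcentered : (∫ s in (t - r)..(t + r), X s) / r - 2 * X t
      = (∫ s in (t - r)..(t + r), (X s - X t)) / r := by
    rw [intervalIntegral.integral_sub hXi intervalIntegrable_const, intervalIntegral.integral_const,
      smul_eq_mul]
    field_simp
    ring
  calc ‖(∫ s in (t - r)..(t + r), X s) / r - 2 * X t‖
      = |∫ s in (t - r)..(t + r), (X s - X t)| / r := by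
        rw [hcentered, Real.norm_eq_abs, abs_div, abs_of_pos hr]
    _ ≤ (∫ s in (t - r)..(t + r), |X s - X t|) / r := by
        gcongr
        exact intervalIntegral.abs_integral_le_integral_abs (by linarith)
    _ = 2 * ((1 / (2 * r)) * ∫ s in (t - r)..(t + r), |X s - X t|) := by
        field_simp

theorem generalized_deriv_at_lebesgue_point
    (X : ℝ → ℝ) (hX : LocallyIntegrable X volume) (t : ℝ) (ht : 0 < t)
    (hleb : Tendsto (fun ε : ℝ => (1 / (2 * ε)) * ∫ s in (t - ε)..(t + ε), |X s - X t|)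
      (nhdsWithin 0 (Ioi 0)) (nhds 0)) :
    HasGenDerivAt (fun u => ∫ s in (0:ℝ)..u, X s) t (X t) := by
  have hXi (a b : ℝ) : IntervalIntegrable X volume a b :=
    (hX.integrableOn_isCompact isCompact_uIcc).intervalIntegrable
  have hincrement (r : ℝ) : (∫ s in (0:ℝ)..(t + r), X s) - ∫ s in (0:ℝ)..(t - r), X s
      = ∫ s in (t - r)..(t + r), X s :=
    intervalIntegral.integral_interval_sub_left (hXi _ _) (hXi _ _)
  have hprimitive := intervalIntegral.continuous_primitive hXi 0
  have hφ (h : ℝ) : IntervalIntegrable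
      (fun r => (∫ s in (0:ℝ)..(t + r), X s) - ∫ s in (0:ℝ)..(t - r), X s) volume 0 h :=
    ((hprimitive.comp (continuous_const.add continuous_id)).sub
      (hprimitive.comp (continuous_const.sub continuous_id))).intervalIntegrable _ _
  have hlim := tendsto_weighted_average hφ
    (by simpa only [hincrement] using tendsto_integral_symm_div_of_lebesgue_point hX hleb)
  rw [HasGenDerivAt, if_neg ht.ne']
  convert hlim.const_mul (1 / 2) using 2
  · ring
  · ring
end

section
/- Let X : ℝ → ℝ be locally (Lebesgue) integrable and define g(t) = ∫₀ᵗ X(s) ds. Then there is a set Z ⊂ (0,∞) of Lebesgue measure zero such that for every t ∈ (0,∞) \ Z the generalized derivative 𝒟g(t) exists and 𝒟g(t) = X(t); i.e. 𝒟g = X Lebesgue-almost everywhere on (0,∞). -/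
open Filter MeasureTheory Set

open Topology

theorem tendsto_intervalIntegral_mul_div_cube {F : ℝ → ℝ} {c : ℝ} (hF : Continuous F)
    (hc : Tendsto (fun r => F r / r) (𝓝[>] 0) (𝓝 c)) :
    Tendsto (fun h => (∫ r in (0:ℝ)..h, r * F r) / h ^ 3) (𝓝[>] 0) (𝓝 (c / 3)) := by
  have hcont : Continuous fun r : ℝ => r * F r := continuous_id.mul hF
  have hN : ∀ h : ℝ, HasDerivAt (fun h => ∫ r in (0:ℝ)..h, r * F r) (h * F h) h := fun h =>
    (hcont.integral_hasStrictDerivAt 0 h).hasDerivAt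
  have hN0 : Tendsto (fun h => ∫ r in (0:ℝ)..h, r * F r) (𝓝[>] 0) (𝓝 0) := by
    simpa using ((intervalIntegral.continuous_primitive
      (fun _ _ => hcont.intervalIntegrable _ _) 0).tendsto 0).mono_left nhdsWithin_le_nhds
  have hD0 : Tendsto (fun h : ℝ => h ^ 3) (𝓝[>] 0) (𝓝 0) := by
    simpa using ((continuous_pow 3).tendsto (0:ℝ)).mono_left nhdsWithin_le_nhds
  refine HasDerivAt.lhopital_zero_nhdsGT (.of_forall hN)
    (.of_forall fun h => by simpa using hasDerivAt_pow 3 h) ?_ hN0 hD0 ?_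
  · filter_upwards [self_mem_nhdsWithin] with h (hh : 0 < h)
    positivity
  · refine (hc.div_const 3).congr' ?_
    filter_upwards [self_mem_nhdsWithin] with h (hh : 0 < h)
    field_simp

theorem HasDerivAt.tendsto_symmetric_difference_quotient {g : ℝ → ℝ} {L t : ℝ}
    (hg : HasDerivAt g L t) :
    Tendsto (fun r => (g (t + r) - g (t - r)) / r) (𝓝[≠] 0) (𝓝 (2 * L)) := by
  have hF : HasDerivAt (fun r => g (t + r) - g (t - r)) (2 * L) 0 := by
    have hright : HasDerivAt (fun r => g (t + r)) L 0 :=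
      .comp_const_add t 0 (by simpa using hg)
    have hleft : HasDerivAt (fun r => g (t - r)) (-L) 0 :=
      .comp_const_sub t 0 (by simpa using hg)
    rw [two_mul, ← sub_neg_eq_add]
    exact hright.sub hleft
  simpa [slope_fun_def_field] using hF.tendsto_slope

theorem HasDerivAt.hasGenDerivAt {g : ℝ → ℝ} {L t : ℝ} (hgc : Continuous g)
    (hg : HasDerivAt g L t) (ht : t ≠ 0) : HasGenDerivAt g t L := by
  have hF : Continuous fun r => g (t + r) - g (t - r) := by fun_prop
  have hlim := tendsto_intervalIntegral_mul_div_cube hF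
    (hg.tendsto_symmetric_difference_quotient.mono_left (nhdsWithin_mono _ (by simp)))
  rw [HasGenDerivAt, if_neg ht]
  convert hlim.const_mul (3 / 2) using 2 <;> ring

theorem generalized_deriv_ae_eq_integrand
    (X : ℝ → ℝ) (hX : LocallyIntegrable X volume) :
    ∃ Z : Set ℝ, Z ⊆ Ioi 0 ∧ volume Z = 0 ∧
      ∀ t ∈ Ioi 0 \ Z, HasGenDerivAt (fun u => ∫ s in (0:ℝ)..u, X s) t (X t) := by
  set g : ℝ → ℝ := fun u => ∫ s in (0:ℝ)..u, X s
  have hgc : Continuous g := intervalIntegral.continuous_primitive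
    (fun _ _ => (hX.integrableOn_isCompact isCompact_uIcc).intervalIntegrable) 0
  have hae : ∀ᵐ t, HasDerivAt g (X t) t := by
    filter_upwards [LocallyIntegrable.ae_hasDerivAt_integral hX] with t ht using ht 0
  refine ⟨Ioi 0 ∩ {t | ¬ HasDerivAt g (X t) t}, inter_subset_left,
    measure_mono_null inter_subset_right (ae_iff.mp hae), ?_⟩
  rintro t ⟨ht, htZ⟩
  have hdiff : HasDerivAt g (X t) t := by_contra fun h => htZ ⟨ht, h⟩
  exact hdiff.hasGenDerivAt hgc ht.ne'
end

section
/- (Chain rule, pathwise core.) Let S : ℝ → ℝ be continuous, let f : ℝ → ℝ be continuously differentiable, let X : ℝ → ℝ be continuous, and define h(t) = ∫₀ᵗ f′(S(s))·X(s) ds for t ≥ 0. Then for every t ≥ 0 the generalized derivative 𝒟h(t) exists and 𝒟h(t) = f′(S(t))·X(t); that is, 𝒟h(t) equals f′(S(t)) times the generalized derivative at t of t ↦ ∫₀ᵗ X(s) ds. -/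
open Filter MeasureTheory Set

/-! Both quotients in `HasGenDerivAt` are averages of difference quotients `u r / r` against the
probability density `3 r² / h³` on `[0, h]`, with `u r = g (t + r) - g (t - r)` (and an extra
factor `1/2`) or `u r = g r - g 0`. Such averages converge to `lim u r / r`, by L'Hôpital's rule
applied to `∫₀ʰ r u r dr` and `h³ / 3`. The primitive of the continuous integrand
`(f' ∘ S) · X` is differentiable with that integrand as derivative, which gives the theorem. -/

open Topology

theorem tendsto_three_div_cube_mul_integral_mul {u : ℝ → ℝ} {c : ℝ} (hu : Continuous u)
    (hc : Tendsto (fun r => u r / r) (𝓝[>] 0) (𝓝 c)) :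
    Tendsto (fun h => 3 / h ^ 3 * ∫ r in (0:ℝ)..h, r * u r) (𝓝[>] 0) (𝓝 c) := by
  have hru : Continuous fun r => r * u r := continuous_id.mul hu
  have hF : ∀ h, HasDerivAt (fun h => ∫ r in (0:ℝ)..h, r * u r) (h * u h) h := fun h =>
    (hru.integral_hasStrictDerivAt 0 h).hasDerivAt
  have hG : ∀ h : ℝ, HasDerivAt (fun h => h ^ 3 / 3) (h ^ 2) h := fun h => by
    simpa using (hasDerivAt_pow 3 h).div_const 3
  have hF0 : Tendsto (fun h => ∫ r in (0:ℝ)..h, r * u r) (𝓝[>] 0) (𝓝 0) := by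
    simpa using (hF 0).continuousAt.tendsto.mono_left nhdsWithin_le_nhds
  have hG0 : Tendsto (fun h : ℝ => h ^ 3 / 3) (𝓝[>] 0) (𝓝 0) := by
    simpa using (hG 0).continuousAt.tendsto.mono_left nhdsWithin_le_nhds
  have hpos : ∀ᶠ h in 𝓝[>] (0:ℝ), 0 < h := self_mem_nhdsWithin
  have hquot : Tendsto (fun h => h * u h / h ^ 2) (𝓝[>] 0) (𝓝 c) :=
    hc.congr' <| hpos.mono fun h hh => by field_simp
  refine (HasDerivAt.lhopital_zero_nhdsGT (.of_forall hF) (.of_forall hG)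
    (hpos.mono fun h hh => pow_ne_zero 2 hh.ne') hF0 hG0 hquot).congr fun h => ?_
  field_simp

theorem HasDerivAt.tendsto_symmetric_slope_nhdsGT {g : ℝ → ℝ} {D t : ℝ} (hg : HasDerivAt g D t) :
    Tendsto (fun r => (g (t + r) - g (t - r)) / r) (𝓝[>] 0) (𝓝 (2 * D)) := by
  have hleft := hg.tendsto_slope_zero_left.comp (by simpa using tendsto_neg_nhdsGT_neg (a := (0:ℝ)))
  refine (two_mul D ▸ hg.tendsto_slope_zero_right.add hleft).congr fun r => ?_
  simp only [Function.comp_apply, smul_eq_mul, inv_neg, ← sub_eq_add_neg]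
  ring

theorem hasGenDerivAt_of_hasDerivAt {g : ℝ → ℝ} {t D : ℝ} (hg : Continuous g)
    (hD : HasDerivAt g D t) : HasGenDerivAt g t D := by
  unfold HasGenDerivAt
  split_ifs with ht
  · subst ht
    refine tendsto_three_div_cube_mul_integral_mul (u := fun r => g r - g 0) (by fun_prop) ?_
    simpa [div_eq_inv_mul] using hD.tendsto_slope_zero_right
  · have hsymm := (tendsto_three_div_cube_mul_integral_mul (u := fun r => g (t + r) - g (t - r))
      (by fun_prop) hD.tendsto_symmetric_slope_nhdsGT).div_const 2
    rw [mul_div_cancel_left₀ D two_ne_zero] at hsymm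
    exact hsymm.congr fun h => by ring

theorem stochastic_chain_rule_pathwise
    (S f X : ℝ → ℝ) (hS : Continuous S) (hf : ContDiff ℝ 1 f) (hX : Continuous X) :
    ∀ t : ℝ, 0 ≤ t →
      HasGenDerivAt (fun u => ∫ s in (0:ℝ)..u, deriv f (S s) * X s) t
        (deriv f (S t) * X t) := by
  intro t _
  have hφ : Continuous fun s => deriv f (S s) * X s :=
    ((hf.continuous_deriv le_rfl).comp hS).mul hX
  exact hasGenDerivAt_of_hasDerivAt
    (intervalIntegral.continuous_primitive (fun a b => hφ.intervalIntegrable a b) 0)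
    (hφ.integral_hasStrictDerivAt 0 t).hasDerivAt
end
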